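/- An integral domain D that contains a nonzero nonunit comparable element is a t-local domain. -/

import Mathlib

open scoped nonZeroDivisors

/-- The `t`-closure of a fractional ideal `E` of an integral domain `D`:
the union (here: supremum, which is a directed union) of `F^v = (F⁻¹)⁻¹` over all
nonzero finitely generated fractional subideals `F` of `E`, viewed as a
`D`-submodule of the fraction field of `D`. -/
noncomputable def tClos (D : Type*) [CommRing D] [IsDomain D]
    (E : FractionalIdeal D⁰ (FractionRing D)) : Submodule D (FractionRing D) :=
  ⨆ F ∈ {F : FractionalIdeal D⁰ (FractionRing D) |
      F ≠ 0 ∧ F ≤ E ∧ (F : Submodule D (FractionRing D)).FG},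
    (((F⁻¹)⁻¹ : FractionalIdeal D⁰ (FractionRing D)) : Submodule D (FractionRing D))

/-- An integral ideal `I` of an integral domain `D` is a `t`-ideal if `I = I^t`. -/
def Ideal.IsT {D : Type*} [CommRing D] [IsDomain D] (I : Ideal D) : Prop :=
  ((I : FractionalIdeal D⁰ (FractionRing D)) : Submodule D (FractionRing D)) = tClos D I

/-- A nonzero element `c` of a domain `D` is comparable if for every `x ∈ D`,
either `cD ⊆ xD` or `xD ⊆ cD`. -/
def IsComparable {D : Type*} [CommRing D] (c : D) : Prop :=
  c ≠ 0 ∧ ∀ x : D, Ideal.span {c} ≤ Ideal.span {x} ∨ Ideal.span {x} ≤ Ideal.span {c}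

/-- An integral domain is `t`-local if it is local and its maximal ideal is a `t`-ideal. -/
def IsTLocal (A : Type*) [CommRing A] [IsDomain A] : Prop :=
  ∃ h : IsLocalRing A, Ideal.IsT (@IsLocalRing.maximalIdeal A _ h)

/-!
A divisor of a comparable element is again comparable, so any two nonunits have a common
nonunit divisor, namely the smaller of two comparable nonunits dividing them. Hence the nonunits
are closed under addition (`D` is local), and every finitely generated ideal inside the maximal
ideal `M` lies in a principal ideal `zD ⊆ M`. As principal fractional ideals are divisorial and
`F ↦ F^v` is monotone, `F^v ⊆ zD ⊆ M` for every such `F`, that is, `M^t = M`.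
-/

namespace IsComparable

variable {D : Type*} [CommRing D] {c : D}

theorem dvd_or_dvd (hc : IsComparable c) (x : D) : x ∣ c ∨ c ∣ x := by
  simpa only [Ideal.span_singleton_le_span_singleton] using hc.2 x

theorem of_dvd [IsDomain D] (hc : IsComparable c) {y : D} (hy : y ∣ c) : IsComparable y := by
  obtain ⟨e, rfl⟩ := hy
  have he : e ≠ 0 := right_ne_zero_of_mul hc.1
  refine ⟨left_ne_zero_of_mul hc.1, fun x => ?_⟩
  simp only [Ideal.span_singleton_le_span_singleton]
  -- compare `x * e` with `c = y * e` and cancel `e`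
  rcases hc.dvd_or_dvd (x * e) with h | h
  · exact .inl ((mul_dvd_mul_iff_right he).mp h)
  · exact .inr ((mul_dvd_mul_iff_right he).mp h)

variable [IsDomain D]

theorem exists_dvd_of_not_isUnit (hc : IsComparable c) (hcu : ¬IsUnit c) {x : D}
    (hx : ¬IsUnit x) : ∃ z, IsComparable z ∧ ¬IsUnit z ∧ z ∣ x :=
  (hc.dvd_or_dvd x).elim (fun h => ⟨x, hc.of_dvd h, hx, dvd_rfl⟩) fun h => ⟨c, hc, hcu, h⟩

theorem exists_dvd_dvd_of_not_isUnit (hc : IsComparable c) (hcu : ¬IsUnit c) {a b : D}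
    (ha : ¬IsUnit a) (hb : ¬IsUnit b) : ∃ z, IsComparable z ∧ ¬IsUnit z ∧ z ∣ a ∧ z ∣ b := by
  obtain ⟨za, hza, hzau, hza_dvd⟩ := hc.exists_dvd_of_not_isUnit hcu ha
  obtain ⟨zb, hzb, hzbu, hzb_dvd⟩ := hc.exists_dvd_of_not_isUnit hcu hb
  rcases hza.dvd_or_dvd zb with h | h
  · exact ⟨zb, hzb, hzbu, h.trans hza_dvd, hzb_dvd⟩
  · exact ⟨za, hza, hzau, hza_dvd, h.trans hzb_dvd⟩

theorem isLocalRing (hc : IsComparable c) (hcu : ¬IsUnit c) : IsLocalRing D :=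
  IsLocalRing.of_nonunits_add fun _ _ ha hb hab => by
    obtain ⟨z, -, hzu, hza, hzb⟩ := hc.exists_dvd_dvd_of_not_isUnit hcu ha hb
    exact hzu (isUnit_of_dvd_unit (dvd_add hza hzb) hab)

theorem exists_le_span_singleton_of_fg (hc : IsComparable c) (hcu : ¬IsUnit c) {I : Ideal D}
    (hfg : I.FG) (hI : I ≠ ⊤) : ∃ z, IsComparable z ∧ ¬IsUnit z ∧ I ≤ Ideal.span {z} := by
  refine Submodule.fg_induction (motive := fun J _ => J ≠ ⊤ →
    ∃ z, IsComparable z ∧ ¬IsUnit z ∧ J ≤ Ideal.span {z}) ?_ ?_ I hfg hI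
  · intro x hx
    obtain ⟨z, hz, hzu, hzx⟩ :=
      hc.exists_dvd_of_not_isUnit hcu (mt Ideal.span_singleton_eq_top.mpr hx)
    exact ⟨z, hz, hzu, Ideal.span_singleton_le_span_singleton.mpr hzx⟩
  · intro J₁ J₂ _ _ ih₁ ih₂ hJ
    obtain ⟨z₁, hz₁, hz₁u, hJz₁⟩ := ih₁ (ne_top_of_le_ne_top hJ le_sup_left)
    obtain ⟨z₂, hz₂, hz₂u, hJz₂⟩ := ih₂ (ne_top_of_le_ne_top hJ le_sup_right)
    obtain ⟨z, hz, hzu, hzz₁, hzz₂⟩ := hc.exists_dvd_dvd_of_not_isUnit hcu hz₁u hz₂u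
    refine ⟨z, hz, hzu, sup_le ?_ ?_⟩
    · exact hJz₁.trans (Ideal.span_singleton_le_span_singleton.mpr hzz₁)
    · exact hJz₂.trans (Ideal.span_singleton_le_span_singleton.mpr hzz₂)

end IsComparable

namespace FractionalIdeal

variable {R K : Type*} [CommRing R] [IsDomain R] [Field K] [Algebra R K] [IsFractionRing R K]

theorem inv_inv_le_spanSingleton {F : FractionalIdeal R⁰ K} {x : K}
    (h : F ≤ spanSingleton R⁰ x) : F⁻¹⁻¹ ≤ spanSingleton R⁰ x := by
  rcases eq_or_ne F 0 with rfl | hF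
  · simp only [inv_zero', zero_le]
  have hx : spanSingleton R⁰ x ≠ 0 := ne_bot_of_le_ne_bot hF h
  have hx_inv : (spanSingleton R⁰ x)⁻¹ ≠ 0 := by
    simpa only [spanSingleton_inv, ne_eq, spanSingleton_eq_zero_iff, inv_eq_zero] using hx
  have hF_inv : (spanSingleton R⁰ x)⁻¹ ≤ F⁻¹ := inv_anti_mono hF hx h
  calc F⁻¹⁻¹ ≤ (spanSingleton R⁰ x)⁻¹⁻¹ :=
        inv_anti_mono hx_inv (ne_bot_of_le_ne_bot hx_inv hF_inv) hF_inv
    _ = spanSingleton R⁰ x := by rw [spanSingleton_inv, spanSingleton_inv, inv_inv]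

end FractionalIdeal

section TClosure

variable {D : Type*} [CommRing D] [IsDomain D]

open FractionalIdeal

theorem le_tClos (E : FractionalIdeal D⁰ (FractionRing D)) :
    (E : Submodule D (FractionRing D)) ≤ tClos D E := by
  intro y hy
  rcases eq_or_ne y 0 with rfl | hy0
  · exact zero_mem _
  have hmem : spanSingleton D⁰ y ∈ {F : FractionalIdeal D⁰ (FractionRing D) |
      F ≠ 0 ∧ F ≤ E ∧ (F : Submodule D (FractionRing D)).FG} :=
    ⟨spanSingleton_eq_zero_iff.not.mpr hy0, spanSingleton_le_iff_mem.mpr hy,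
      coe_spanSingleton D⁰ y ▸ Submodule.fg_span_singleton y⟩
  refine le_iSup₂_of_le (f := fun F (_ : F ∈ _) =>
    ((F⁻¹⁻¹ : FractionalIdeal D⁰ (FractionRing D)) : Submodule D (FractionRing D))) _ hmem ?_
    (mem_spanSingleton_self D⁰ y)
  simp only [spanSingleton_inv, inv_inv, le_refl]

theorem tClos_le_of_forall_fg_le_spanSingleton {E : FractionalIdeal D⁰ (FractionRing D)}
    (h : ∀ F : FractionalIdeal D⁰ (FractionRing D), F ≠ 0 → F ≤ E →
      (F : Submodule D (FractionRing D)).FG →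
        ∃ x, F ≤ spanSingleton D⁰ x ∧ spanSingleton D⁰ x ≤ E) :
    tClos D E ≤ E :=
  iSup₂_le fun F ⟨hF0, hFE, hFfg⟩ =>
    let ⟨_, hFx, hxE⟩ := h F hF0 hFE hFfg
    coe_le_coe.mpr ((inv_inv_le_spanSingleton hFx).trans hxE)

theorem Ideal.isT_of_forall_fg_le_span_singleton {I : Ideal D}
    (h : ∀ J : Ideal D, J.FG → J ≤ I → ∃ z, J ≤ Ideal.span {z} ∧ Ideal.span {z} ≤ I) :
    I.IsT := by
  refine le_antisymm (le_tClos _) (tClos_le_of_forall_fg_le_spanSingleton fun F _ hFI hFfg => ?_)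
  obtain ⟨J, rfl⟩ := le_one_iff_exists_coeIdeal.mp (hFI.trans coeIdeal_le_one)
  rw [coeIdeal_fg _ (IsFractionRing.injective D _)] at hFfg
  obtain ⟨z, hJz, hzI⟩ := h J hFfg ((coeIdeal_le_coeIdeal _).mp hFI)
  refine ⟨algebraMap D _ z, ?_, ?_⟩ <;> rw [← coeIdeal_span_singleton, coeIdeal_le_coeIdeal]
  exacts [hJz, hzI]

end TClosure

/-- An integral domain that contains a nonzero nonunit comparable element is a
`t`-local domain. -/
theorem t_local_of_comparable {D : Type*} [CommRing D] [IsDomain D]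
    (h : ∃ c : D, IsComparable c ∧ ¬ IsUnit c) : IsTLocal D := by
  obtain ⟨c, hc, hcu⟩ := h
  have := hc.isLocalRing hcu
  refine ⟨this, Ideal.isT_of_forall_fg_le_span_singleton fun J hJfg hJM => ?_⟩
  have hJ : J ≠ ⊤ := ne_top_of_le_ne_top (IsLocalRing.maximalIdeal.isMaximal D).ne_top hJM
  obtain ⟨z, -, hzu, hJz⟩ := hc.exists_le_span_singleton_of_fg hcu hJfg hJ
  exact ⟨z, hJz, (Ideal.span_singleton_le_iff_mem _).mpr ((IsLocalRing.mem_maximalIdeal z).mpr hzu)⟩
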